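/- For n ≥ 1, let x^k_1 ≤ x^k_2 be reals for k = 1,…,n, with x^1_1 ≤ x^k_1 for all k. Define t_{i1…in} = min_k x^k_{ik} for each index vector (i1,…,in) ∈ {1,2}^n, and the n-th order interaction contrast c(t) = Σ_{(i1,…,in)} (−1)^{n + i1 + … + in} h(t − t_{i1…in}), where h is the Heaviside function. Then c(t) ≤ 0 for all t if n is even, and c(t) ≥ 0 for all t if n is odd. -/

import Mathlib

/-! Write `H := heaviside`. Since `1 - H (t - min_k a_k) = ∏_k (1 - H (t - a_k))`, the signed sum over
`{0,1}^n` factorises into a product over `k` of two-term alternating sums, which gives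
`c t = -∏_k (H (t - x k 1) - H (t - x k 0))`. As `H` is monotone and `x k 0 ≤ x k 1`, every factor
is `≤ 0`, so the sign of `c t` is `(-1)^(n+1)`. -/

noncomputable def heaviside (x : ℝ) : ℝ := if 0 ≤ x then 1 else 0

theorem heaviside_monotone : Monotone heaviside := by
  intro a b hab
  unfold heaviside
  split_ifs <;> linarith

theorem one_sub_heaviside_sub (t a : ℝ) :
    1 - heaviside (t - a) = if t < a then 1 else 0 := by
  unfold heaviside
  split_ifs <;> linarith

theorem heaviside_sub_inf' {ι : Type*} (s : Finset ι) (hs : s.Nonempty) (f : ι → ℝ) (t : ℝ) :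
    heaviside (t - s.inf' hs f) = 1 - ∏ k ∈ s, (1 - heaviside (t - f k)) := by
  rw [eq_sub_iff_add_eq, ← eq_sub_iff_add_eq', one_sub_heaviside_sub]
  simp only [one_sub_heaviside_sub, Finset.prod_boole, Finset.lt_inf'_iff]

theorem neg_one_pow_card_add_sum_succ {ι : Type*} [Fintype ι] (i : ι → ℕ) :
    (-1 : ℝ) ^ (Fintype.card ι + ∑ k, (i k + 1)) = ∏ k, (-1 : ℝ) ^ i k := by
  rw [Finset.prod_pow_eq_pow_sum, Finset.sum_add_distrib, Finset.sum_const, Finset.card_univ,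
    smul_eq_mul, mul_one, add_comm, add_assoc, ← two_mul, pow_add, pow_mul]
  norm_num

theorem sum_neg_one_pow_mul_heaviside_sub_inf' {ι : Type*} [Fintype ι] [DecidableEq ι]
    [Nonempty ι] (f : ι → Fin 2 → ℝ) (t : ℝ) :
    ∑ i : ι → Fin 2, (∏ k, (-1 : ℝ) ^ (i k : ℕ)) *
        heaviside (t - Finset.univ.inf' Finset.univ_nonempty (fun k => f k (i k))) =
      -∏ k, (heaviside (t - f k 1) - heaviside (t - f k 0)) := by
  have alternating_sum (g : Fin 2 → ℝ) : ∑ j : Fin 2, (-1 : ℝ) ^ (j : ℕ) * g j = g 0 - g 1 := by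
    simp [Fin.sum_univ_two, sub_eq_add_neg]
  have prod_alternating_sum_one : ∏ _k : ι, ∑ j : Fin 2, (-1 : ℝ) ^ (j : ℕ) = 0 := by
    simp [Fin.sum_univ_two]
  simp_rw [heaviside_sub_inf', mul_sub, mul_one, Finset.sum_sub_distrib,
    ← Finset.prod_mul_distrib]
  rw [← Fintype.prod_sum (κ := fun _ => Fin 2) (fun _ j => (-1 : ℝ) ^ (j : ℕ)),
    prod_alternating_sum_one, ← Fintype.prod_sum (κ := fun _ => Fin 2)
      (fun k j => (-1 : ℝ) ^ (j : ℕ) * (1 - heaviside (t - f k j)))]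
  simp only [alternating_sum, sub_sub_sub_cancel_left, zero_sub]

theorem stmt13_general (n : ℕ) (hn : 0 < n) (x : Fin n → Fin 2 → ℝ)
    (hx : ∀ k, x k 0 ≤ x k 1)
    (c : ℝ → ℝ)
    (hc : ∀ t, c t = ∑ i : Fin n → Fin 2,
      (-1 : ℝ) ^ (n + ∑ k, ((i k : ℕ) + 1)) *
        heaviside (t - Finset.univ.inf' (Finset.univ_nonempty_iff.mpr ⟨⟨0, hn⟩⟩)
          (fun k => x k (i k)))) :
    (Even n → ∀ t, c t ≤ 0) ∧ (Odd n → ∀ t, 0 ≤ c t) := by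
  have : Nonempty (Fin n) := ⟨⟨0, hn⟩⟩
  have hc_prod (t : ℝ) :
      c t = (-1) ^ (n + 1) * ∏ k, (heaviside (t - x k 0) - heaviside (t - x k 1)) := by
    have hsign := neg_one_pow_card_add_sum_succ (ι := Fin n)
    simp only [Fintype.card_fin] at hsign
    rw [hc t]
    simp_rw [hsign, sum_neg_one_pow_mul_heaviside_sub_inf', ← neg_sub (heaviside (t - x _ 0)),
      Finset.prod_neg, Finset.card_univ, Fintype.card_fin, pow_succ]
    ring
  have prod_nonneg (t : ℝ) : 0 ≤ ∏ k, (heaviside (t - x k 0) - heaviside (t - x k 1)) :=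
    Finset.prod_nonneg fun k _ =>
      sub_nonneg.2 (heaviside_monotone (sub_le_sub_left (hx k) t))
  refine ⟨fun hev t => ?_, fun hodd t => ?_⟩
  · rw [hc_prod, pow_succ, hev.neg_one_pow, one_mul, neg_one_mul, neg_nonpos]
    exact prod_nonneg t
  · rw [hc_prod, hodd.add_one.neg_one_pow, one_mul]
    exact prod_nonneg t

theorem stmt13 (n : ℕ) (hn : 0 < n) (x : Fin n → Fin 2 → ℝ)
    (hx : ∀ k, x k 0 ≤ x k 1)
    (hfirst : ∀ k, x ⟨0, hn⟩ 0 ≤ x k 0)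
    (c : ℝ → ℝ)
    (hc : ∀ t, c t = ∑ i : Fin n → Fin 2,
      (-1 : ℝ) ^ (n + ∑ k, ((i k : ℕ) + 1)) *
        heaviside (t - Finset.univ.inf' (Finset.univ_nonempty_iff.mpr ⟨⟨0, hn⟩⟩)
          (fun k => x k (i k)))) :
    (Even n → ∀ t, c t ≤ 0) ∧ (Odd n → ∀ t, 0 ≤ c t) :=
  stmt13_general n hn x hx c hc
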